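/- arXiv:math-ph/0506048 — 2 statements merged into one kernel-verified Lean document; each statement's English description precedes it below -/
import Mathlib

section
/- Let A ≥ 1 and let λ > 0 satisfy λ < 1/(16(1+A)²). Define the nonlinear operator K on pairs (ψ, q) ∈ C(Δ_λ) × C([0,λ]) (where Δ_λ = {(y,t) : 0 ≤ y ≤ t ≤ 2λ - y}) by K(ψ,q) = (K₁(ψ,q), K₂(ψ,q)) with K₁(ψ,q)(y,t) = -∫₀^y q(η)[g₁(η, t-η+y) + ∫₀^η ψ(ξ, t-η+ξ) dξ] dη + g₂(y,t) and K₂(ψ,q)(y) = -2∫₀^y q(η)[g₁(η, 2y-η) + ∫₀^η ψ(ξ, y-η+ξ) dξ] dη + g₃(y), where g₁, g₂, g₃ are given continuous functions bounded in absolute value by A. Then K maps the product of closed balls of radius 2A (in sup norm) into itself and is a contraction with contraction constant at most 3/8 with respect to the norm ‖(ψ,q)‖ = max(‖ψ‖_∞, ‖q‖_∞). In particular K has a unique fixed point in this ball. -/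
open Set MeasureTheory intervalIntegral
open scoped BoundedContinuousFunction

/-!
Each integral in `K` runs over a characteristic sub-triangle of `Δ_λ` of height `y ≤ λ`, so on the
ball of radius `2A` the Volterra term is at most `2A (A + 2Aλ) λ`, which is `≤ A/4` once
`(1 + A) λ ≤ 1/16`: this gives the self-map. The Volterra term is linear in `q` and affine in `ψ`,
so the difference of two of them splits into a term in `q - q'` and a term in `ψ - ψ'`, each of size
`O(Aλ) M`, which gives the contraction. For the fixed point, functions on `Δ_λ` and `[0, λ]` are
extended to `ℝ²` and `ℝ` by composing with continuous retractions; `K` then becomes a contraction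
of a closed ball of bounded continuous functions, and Banach's theorem applies.
-/

def triangle (lam : ℝ) : Set (ℝ × ℝ) := {p | 0 ≤ p.1 ∧ p.1 ≤ p.2 ∧ p.2 ≤ 2 * lam - p.1}

theorem fst_le_of_mem_triangle {lam : ℝ} {p : ℝ × ℝ} (hp : p ∈ triangle lam) : p.1 ≤ lam := by
  obtain ⟨-, h₁, h₂⟩ := hp
  linarith

theorem diag_mem_triangle {lam y : ℝ} (hy : y ∈ Icc 0 lam) : (y, y) ∈ triangle lam :=
  ⟨hy.1, le_rfl, by linarith [hy.2]⟩

theorem characteristic_mem_triangle {lam y t η ζ : ℝ} (hp : (y, t) ∈ triangle lam)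
    (hζ : 0 ≤ ζ) (hζη : ζ ≤ η) (hηy : η ≤ y) : (ζ, t - η + ζ) ∈ triangle lam := by
  obtain ⟨-, h₁, h₂⟩ := hp
  exact ⟨hζ, by simp only; linarith, by simp only; linarith⟩

theorem abs_intervalIntegral_le_mul {f : ℝ → ℝ} {C x : ℝ} (hx : 0 ≤ x)
    (hf : ∀ s ∈ Icc 0 x, |f s| ≤ C) : |∫ s in (0:ℝ)..x, f s| ≤ C * x := by
  have h := norm_integral_le_of_norm_le_const (a := 0) (b := x) (f := f) fun s hs => by
    simpa only [Real.norm_eq_abs] using hf s (Ioc_subset_Icc_self ((uIoc_of_le hx) ▸ hs))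
  rwa [Real.norm_eq_abs, sub_zero, abs_of_nonneg hx] at h

noncomputable def volterra (g ψ : ℝ × ℝ → ℝ) (q : ℝ → ℝ) (y t : ℝ) : ℝ :=
  ∫ η in (0:ℝ)..y, q η * (g (η, t - η + y) + ∫ ζ in (0:ℝ)..η, ψ (ζ, t - η + ζ))

section Volterra

variable {g ψ ψ' : ℝ × ℝ → ℝ} {q q' : ℝ → ℝ}

theorem volterra_diag (g ψ : ℝ × ℝ → ℝ) (q : ℝ → ℝ) (y : ℝ) :
    volterra g ψ q y y
      = ∫ η in (0:ℝ)..y, q η * (g (η, 2 * y - η) + ∫ ζ in (0:ℝ)..η, ψ (ζ, y - η + ζ)) :=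
  integral_congr fun η _ => by rw [show y - η + y = 2 * y - η by ring]

theorem continuous_volterra_integrand (hg : Continuous g) (hψ : Continuous ψ)
    (hq : Continuous q) :
    Continuous fun x : (ℝ × ℝ) × ℝ =>
      q x.2 * (g (x.2, x.1.2 - x.2 + x.1.1) + ∫ ζ in (0:ℝ)..x.2, ψ (ζ, x.1.2 - x.2 + ζ)) := by
  refine (hq.comp continuous_snd).mul ((hg.comp (by fun_prop)).add ?_)
  exact continuous_parametric_intervalIntegral_of_continuous
    (f := fun (x : (ℝ × ℝ) × ℝ) (ζ : ℝ) => ψ (ζ, x.1.2 - x.2 + ζ))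
    (hψ.comp (by fun_prop)) continuous_snd

theorem continuous_volterra (hg : Continuous g) (hψ : Continuous ψ) (hq : Continuous q) :
    Continuous fun p : ℝ × ℝ => volterra g ψ q p.1 p.2 :=
  continuous_parametric_intervalIntegral_of_continuous
    (continuous_volterra_integrand hg hψ hq) continuous_fst

theorem volterra_sub_volterra (hg : Continuous g) (hψ : Continuous ψ) (hψ' : Continuous ψ')
    (hq : Continuous q) (hq' : Continuous q') (y t : ℝ) :
    volterra g ψ q y t - volterra g ψ' q' y t
      = volterra g ψ (q - q') y t + volterra 0 (ψ - ψ') q' y t := by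
  have integrable {g ψ : ℝ × ℝ → ℝ} {q : ℝ → ℝ} (hg : Continuous g) (hψ : Continuous ψ)
      (hq : Continuous q) :
      IntervalIntegrable (fun η => q η * (g (η, t - η + y)
        + ∫ ζ in (0:ℝ)..η, ψ (ζ, t - η + ζ))) volume 0 y :=
    ((continuous_volterra_integrand hg hψ hq).comp
      (continuous_const.prodMk continuous_id :
        Continuous fun η : ℝ => ((y, t), η))).intervalIntegrable _ _
  unfold volterra
  rw [← integral_sub (integrable hg hψ hq) (integrable hg hψ' hq'),
    ← integral_add (integrable hg hψ (hq.sub hq'))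
      (integrable (g := 0) continuous_const (hψ.sub hψ') hq')]
  refine integral_congr fun η _ => ?_
  have hψη : Continuous fun ζ => ψ (ζ, t - η + ζ) := hψ.comp (by fun_prop)
  have hψ'η : Continuous fun ζ => ψ' (ζ, t - η + ζ) := hψ'.comp (by fun_prop)
  simp only [Pi.sub_apply, Pi.zero_apply,
    integral_sub (hψη.intervalIntegrable 0 η) (hψ'η.intervalIntegrable 0 η)]
  ring

theorem abs_volterra_le {B a b y t : ℝ} (hy : 0 ≤ y) (hg : ∀ p, |g p| ≤ B)
    (hq : ∀ η ∈ Icc 0 y, |q η| ≤ a) (hψ : ∀ η ∈ Icc 0 y, ∀ ζ ∈ Icc 0 η, |ψ (ζ, t - η + ζ)| ≤ b) :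
    |volterra g ψ q y t| ≤ a * (B + b * y) * y := by
  refine abs_intervalIntegral_le_mul hy fun η hη => ?_
  have ha : 0 ≤ a := (abs_nonneg _).trans (hq 0 ⟨le_rfl, hy⟩)
  have hb : 0 ≤ b := (abs_nonneg _).trans (hψ η hη 0 ⟨le_rfl, hη.1⟩)
  have hinner : |∫ ζ in (0:ℝ)..η, ψ (ζ, t - η + ζ)| ≤ b * y :=
    (abs_intervalIntegral_le_mul hη.1 (hψ η hη)).trans (mul_le_mul_of_nonneg_left hη.2 hb)
  rw [abs_mul]
  exact mul_le_mul (hq η hη) ((abs_add_le _ _).trans (add_le_add (hg _) hinner))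
    (abs_nonneg _) ha

theorem abs_volterra_le_of_mem_triangle {B a b lam y t : ℝ} (hg : ∀ p, |g p| ≤ B)
    (hψ : ∀ p ∈ triangle lam, |ψ p| ≤ b) (hq : ∀ s ∈ Icc 0 lam, |q s| ≤ a)
    (hp : (y, t) ∈ triangle lam) : |volterra g ψ q y t| ≤ a * (B + b * y) * y :=
  abs_volterra_le hp.1 hg (fun η hη => hq η ⟨hη.1, hη.2.trans (fst_le_of_mem_triangle hp)⟩)
    fun _ hη _ hζ => hψ _ (characteristic_mem_triangle hp hζ.1 hζ.2 hη.2)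

end Volterra

noncomputable def operatorK₁ (g₁ g₂ ψ : ℝ × ℝ → ℝ) (q : ℝ → ℝ) (p : ℝ × ℝ) : ℝ :=
  -volterra g₁ ψ q p.1 p.2 + g₂ p

noncomputable def operatorK₂ (g₁ : ℝ × ℝ → ℝ) (g₃ : ℝ → ℝ) (ψ : ℝ × ℝ → ℝ) (q : ℝ → ℝ)
    (y : ℝ) : ℝ :=
  -(2 * volterra g₁ ψ q y y) + g₃ y

theorem one_add_mul_le_of_lt {A lam : ℝ} (hA : 0 ≤ A)
    (h : lam < 1 / (16 * (1 + A) ^ 2)) : (1 + A) * lam ≤ 1 / 16 := by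
  have h₁ : (1 + A) ^ 2 * lam < 1 / 16 := by
    rw [lt_div_iff₀ (by positivity)] at h
    linarith
  nlinarith

section Estimates

variable {A lam : ℝ} {g₁ ψ ψ' : ℝ × ℝ → ℝ} {q q' : ℝ → ℝ}

theorem two_mul_abs_volterra_le (hsmall : (1 + A) * lam ≤ 1 / 16) (hg₁ : ∀ p, |g₁ p| ≤ A)
    (hψ : ∀ p ∈ triangle lam, |ψ p| ≤ 2 * A) (hq : ∀ s ∈ Icc 0 lam, |q s| ≤ 2 * A)
    {y t : ℝ} (hp : (y, t) ∈ triangle lam) : 2 * |volterra g₁ ψ q y t| ≤ A := by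
  have hV := abs_volterra_le_of_mem_triangle hg₁ hψ hq hp
  have hA : 0 ≤ A := (abs_nonneg _).trans (hg₁ 0)
  have hy : 0 ≤ y := hp.1
  have hAy : A * y ≤ 1 / 16 := by nlinarith [fst_le_of_mem_triangle hp]
  have hy' : y ≤ 1 / 16 := by nlinarith [fst_le_of_mem_triangle hp]
  nlinarith [mul_le_mul_of_nonneg_left hAy hA,
    mul_le_mul_of_nonneg_left (mul_le_mul hAy hy' hy (by norm_num)) hA]

theorem two_mul_abs_volterra_sub_le {M : ℝ} (hg₁c : Continuous g₁) (hψc : Continuous ψ)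
    (hψ'c : Continuous ψ') (hqc : Continuous q) (hq'c : Continuous q')
    (hsmall : (1 + A) * lam ≤ 1 / 16) (hg₁ : ∀ p, |g₁ p| ≤ A)
    (hψ : ∀ p ∈ triangle lam, |ψ p| ≤ 2 * A) (hq' : ∀ s ∈ Icc 0 lam, |q' s| ≤ 2 * A)
    (hdψ : ∀ p ∈ triangle lam, |ψ p - ψ' p| ≤ M) (hdq : ∀ s ∈ Icc 0 lam, |q s - q' s| ≤ M)
    {y t : ℝ} (hp : (y, t) ∈ triangle lam) :
    2 * |volterra g₁ ψ q y t - volterra g₁ ψ' q' y t| ≤ 3 / 8 * M := by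
  rw [volterra_sub_volterra hg₁c hψc hψ'c hqc hq'c]
  have hV₁ := abs_volterra_le_of_mem_triangle (q := q - q') hg₁ hψ hdq hp
  have hV₂ := abs_volterra_le_of_mem_triangle (g := 0) (ψ := ψ - ψ') (B := 0)
    (fun _ => by simp) hdψ hq' hp
  have hA : 0 ≤ A := (abs_nonneg _).trans (hg₁ 0)
  have hy : 0 ≤ y := hp.1
  have hM : 0 ≤ M := (abs_nonneg _).trans (hdq y ⟨hy, fst_le_of_mem_triangle hp⟩)
  have hAy : A * y ≤ 1 / 16 := by nlinarith [fst_le_of_mem_triangle hp]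
  have hy' : y ≤ 1 / 16 := by nlinarith [fst_le_of_mem_triangle hp]
  have hsum := abs_add_le (volterra g₁ ψ (q - q') y t) (volterra 0 (ψ - ψ') q' y t)
  nlinarith [mul_le_mul_of_nonneg_left hAy hM, mul_nonneg (mul_nonneg hM hA) hy,
    mul_le_mul (mul_le_mul_of_nonneg_left hAy hM) hy' (by positivity) (by positivity)]

end Estimates

def MapsBall (lam R : ℝ) (K₁ : (ℝ × ℝ → ℝ) → (ℝ → ℝ) → ℝ × ℝ → ℝ)
    (K₂ : (ℝ × ℝ → ℝ) → (ℝ → ℝ) → ℝ → ℝ) : Prop :=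
  ∀ (ψ : ℝ × ℝ → ℝ) (q : ℝ → ℝ), Continuous ψ → Continuous q →
    (∀ p ∈ triangle lam, |ψ p| ≤ R) → (∀ y ∈ Icc (0:ℝ) lam, |q y| ≤ R) →
    (∀ p ∈ triangle lam, |K₁ ψ q p| ≤ R) ∧ (∀ y ∈ Icc (0:ℝ) lam, |K₂ ψ q y| ≤ R)

def ContractsOnBall (lam R c : ℝ) (K₁ : (ℝ × ℝ → ℝ) → (ℝ → ℝ) → ℝ × ℝ → ℝ)
    (K₂ : (ℝ × ℝ → ℝ) → (ℝ → ℝ) → ℝ → ℝ) : Prop :=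
  ∀ (ψ ψ' : ℝ × ℝ → ℝ) (q q' : ℝ → ℝ) (M : ℝ), Continuous ψ → Continuous ψ' →
    Continuous q → Continuous q' →
    (∀ p ∈ triangle lam, |ψ p| ≤ R) → (∀ y ∈ Icc (0:ℝ) lam, |q y| ≤ R) →
    (∀ p ∈ triangle lam, |ψ' p| ≤ R) → (∀ y ∈ Icc (0:ℝ) lam, |q' y| ≤ R) →
    (∀ p ∈ triangle lam, |ψ p - ψ' p| ≤ M) → (∀ y ∈ Icc (0:ℝ) lam, |q y - q' y| ≤ M) →
    (∀ p ∈ triangle lam, |K₁ ψ q p - K₁ ψ' q' p| ≤ c * M) ∧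
    (∀ y ∈ Icc (0:ℝ) lam, |K₂ ψ q y - K₂ ψ' q' y| ≤ c * M)

section Operator

variable {A lam : ℝ} {g₁ g₂ ψ : ℝ × ℝ → ℝ} {g₃ q : ℝ → ℝ}

theorem continuous_operatorK₁ (hg₁ : Continuous g₁) (hg₂ : Continuous g₂) (hψ : Continuous ψ)
    (hq : Continuous q) : Continuous (operatorK₁ g₁ g₂ ψ q) :=
  (continuous_volterra hg₁ hψ hq).neg.add hg₂

theorem continuous_operatorK₂ (hg₁ : Continuous g₁) (hg₃ : Continuous g₃) (hψ : Continuous ψ)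
    (hq : Continuous q) : Continuous (operatorK₂ g₁ g₃ ψ q) :=
  (((continuous_volterra hg₁ hψ hq).comp (continuous_id.prodMk continuous_id)).const_mul
    2).neg.add hg₃

theorem mapsBall_operatorK (hsmall : (1 + A) * lam ≤ 1 / 16) (hg₁ : ∀ p, |g₁ p| ≤ A)
    (hg₂ : ∀ p, |g₂ p| ≤ A) (hg₃ : ∀ s, |g₃ s| ≤ A) :
    MapsBall lam (2 * A) (operatorK₁ g₁ g₂) (operatorK₂ g₁ g₃) := by
  intro ψ q _ _ hψ hq
  constructor
  · intro p hp
    have hV := two_mul_abs_volterra_le hsmall hg₁ hψ hq hp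
    have hsum := abs_add_le (-volterra g₁ ψ q p.1 p.2) (g₂ p)
    rw [abs_neg] at hsum
    unfold operatorK₁
    linarith [hg₂ p, abs_nonneg (volterra g₁ ψ q p.1 p.2)]
  · intro y hy
    have hV := two_mul_abs_volterra_le hsmall hg₁ hψ hq (diag_mem_triangle hy)
    have hsum := abs_add_le (-(2 * volterra g₁ ψ q y y)) (g₃ y)
    rw [abs_neg, abs_mul, abs_two] at hsum
    unfold operatorK₂
    linarith [hg₃ y]

theorem contractsOnBall_operatorK (hg₁c : Continuous g₁) (hsmall : (1 + A) * lam ≤ 1 / 16)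
    (hg₁ : ∀ p, |g₁ p| ≤ A) :
    ContractsOnBall lam (2 * A) (3 / 8) (operatorK₁ g₁ g₂) (operatorK₂ g₁ g₃) := by
  intro ψ ψ' q q' M hψc hψ'c hqc hq'c hψ _ _ hq' hdψ hdq
  have hV {y t : ℝ} (hp : (y, t) ∈ triangle lam) :=
    two_mul_abs_volterra_sub_le hg₁c hψc hψ'c hqc hq'c hsmall hg₁ hψ hq' hdψ hdq hp
  constructor
  · intro p hp
    have hp' := hV hp
    have hM : 0 ≤ 3 / 8 * M := le_trans (by positivity) hp'
    rw [operatorK₁, operatorK₁, show ∀ a b c : ℝ, -a + c - (-b + c) = -(a - b)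
      from fun _ _ _ => by ring, abs_neg]
    linarith
  · intro y hy
    rw [operatorK₂, operatorK₂, show ∀ a b c : ℝ, -(2 * a) + c - (-(2 * b) + c) = -(2 * (a - b))
      from fun _ _ _ => by ring, abs_neg, abs_mul, abs_two]
    exact hV (diag_mem_triangle hy)

end Operator

def intervalRetraction (lam : ℝ) : C(ℝ, ℝ) :=
  ⟨fun s => max 0 (min s lam), by fun_prop⟩

def triangleRetraction (lam : ℝ) : C(ℝ × ℝ, ℝ × ℝ) :=
  ⟨fun p => (intervalRetraction lam p.1,
    max (intervalRetraction lam p.1) (min p.2 (2 * lam - intervalRetraction lam p.1))),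
    by fun_prop⟩

section Retraction

variable {lam : ℝ}

theorem intervalRetraction_mem (hlam : 0 ≤ lam) (s : ℝ) : intervalRetraction lam s ∈ Icc 0 lam :=
  ⟨le_max_left _ _, max_le hlam (min_le_right _ _)⟩

theorem intervalRetraction_of_mem {s : ℝ} (hs : s ∈ Icc 0 lam) : intervalRetraction lam s = s := by
  simp [intervalRetraction, hs.1, hs.2]

theorem triangleRetraction_mem (hlam : 0 ≤ lam) (p : ℝ × ℝ) :
    triangleRetraction lam p ∈ triangle lam := by
  have hy := intervalRetraction_mem hlam p.1
  refine ⟨hy.1, le_max_left _ _, max_le ?_ (min_le_right _ _)⟩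
  change intervalRetraction lam p.1 ≤ 2 * lam - intervalRetraction lam p.1
  linarith [hy.2]

theorem triangleRetraction_of_mem {p : ℝ × ℝ} (hp : p ∈ triangle lam) :
    triangleRetraction lam p = p := by
  obtain ⟨h₀, h₁, h₂⟩ := hp
  have hy : intervalRetraction lam p.1 = p.1 := intervalRetraction_of_mem ⟨h₀, by linarith⟩
  simp [triangleRetraction, hy, h₁, h₂]

end Retraction

section FixedPoint

variable {lam R c : ℝ} {K₁ : (ℝ × ℝ → ℝ) → (ℝ → ℝ) → ℝ × ℝ → ℝ}
  {K₂ : (ℝ × ℝ → ℝ) → (ℝ → ℝ) → ℝ → ℝ}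

abbrev BoundedPair := (ℝ × ℝ →ᵇ ℝ) × (ℝ →ᵇ ℝ)

theorem abs_sub_le_dist_fst (x x' : BoundedPair) (p : ℝ × ℝ) : |x.1 p - x'.1 p| ≤ dist x x' :=
  ((x.1.dist_coe_le_dist p).trans (le_max_left _ _) :)

theorem abs_sub_le_dist_snd (x x' : BoundedPair) (s : ℝ) : |x.2 s - x'.2 s| ≤ dist x x' :=
  ((x.2.dist_coe_le_dist s).trans (le_max_right _ _) :)

def extendPair (hlam : 0 ≤ lam) (ψ : ℝ × ℝ → ℝ) (q : ℝ → ℝ) (hψ : Continuous ψ)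
    (hq : Continuous q) (hψR : ∀ p ∈ triangle lam, |ψ p| ≤ R)
    (hqR : ∀ y ∈ Icc 0 lam, |q y| ≤ R) : BoundedPair :=
  (.ofNormedAddCommGroup (ψ ∘ triangleRetraction lam) (by fun_prop) R
      fun p => hψR _ (triangleRetraction_mem hlam p),
    .ofNormedAddCommGroup (q ∘ intervalRetraction lam) (by fun_prop) R
      fun s => hqR _ (intervalRetraction_mem hlam s))

theorem extendPair_fst_of_mem (hlam : 0 ≤ lam) {ψ : ℝ × ℝ → ℝ} {q : ℝ → ℝ}
    (hψ : Continuous ψ) (hq : Continuous q) (hψR : ∀ p ∈ triangle lam, |ψ p| ≤ R)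
    (hqR : ∀ y ∈ Icc 0 lam, |q y| ≤ R) {p : ℝ × ℝ} (hp : p ∈ triangle lam) :
    (extendPair hlam ψ q hψ hq hψR hqR).1 p = ψ p :=
  congrArg ψ (triangleRetraction_of_mem hp)

theorem extendPair_snd_of_mem (hlam : 0 ≤ lam) {ψ : ℝ × ℝ → ℝ} {q : ℝ → ℝ}
    (hψ : Continuous ψ) (hq : Continuous q) (hψR : ∀ p ∈ triangle lam, |ψ p| ≤ R)
    (hqR : ∀ y ∈ Icc 0 lam, |q y| ≤ R) {s : ℝ} (hs : s ∈ Icc 0 lam) :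
    (extendPair hlam ψ q hψ hq hψR hqR).2 s = q s :=
  congrArg q (intervalRetraction_of_mem hs)

theorem extendPair_mem_closedBall (hlam : 0 ≤ lam) (hR : 0 ≤ R) {ψ : ℝ × ℝ → ℝ} {q : ℝ → ℝ}
    (hψ : Continuous ψ) (hq : Continuous q) (hψR : ∀ p ∈ triangle lam, |ψ p| ≤ R)
    (hqR : ∀ y ∈ Icc 0 lam, |q y| ≤ R) :
    extendPair hlam ψ q hψ hq hψR hqR ∈ Metric.closedBall 0 R := by
  rw [mem_closedBall_zero_iff, Prod.norm_def]
  exact max_le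
    (BoundedContinuousFunction.norm_ofNormedAddCommGroup_le _ hR
      fun p => hψR _ (triangleRetraction_mem hlam p))
    (BoundedContinuousFunction.norm_ofNormedAddCommGroup_le _ hR
      fun s => hqR _ (intervalRetraction_mem hlam s))

theorem dist_extendPair_le (hlam : 0 ≤ lam) {M : ℝ} (hM : 0 ≤ M) {ψ ψ' : ℝ × ℝ → ℝ}
    {q q' : ℝ → ℝ} (hψ : Continuous ψ) (hq : Continuous q) (hψ' : Continuous ψ')
    (hq' : Continuous q') (hψR : ∀ p ∈ triangle lam, |ψ p| ≤ R)
    (hqR : ∀ y ∈ Icc 0 lam, |q y| ≤ R) (hψ'R : ∀ p ∈ triangle lam, |ψ' p| ≤ R)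
    (hq'R : ∀ y ∈ Icc 0 lam, |q' y| ≤ R)
    (hdψ : ∀ p ∈ triangle lam, |ψ p - ψ' p| ≤ M) (hdq : ∀ y ∈ Icc 0 lam, |q y - q' y| ≤ M) :
    dist (extendPair hlam ψ q hψ hq hψR hqR) (extendPair hlam ψ' q' hψ' hq' hψ'R hq'R) ≤ M := by
  rw [Prod.dist_eq]
  exact max_le ((BoundedContinuousFunction.dist_le hM).2 fun p =>
      hdψ _ (triangleRetraction_mem hlam p))
    ((BoundedContinuousFunction.dist_le hM).2 fun s => hdq _ (intervalRetraction_mem hlam s))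

theorem abs_sub_le_dist_extendPair (hlam : 0 ≤ lam) {ψ ψ' : ℝ × ℝ → ℝ} {q q' : ℝ → ℝ}
    (hψ : Continuous ψ) (hq : Continuous q) (hψ' : Continuous ψ') (hq' : Continuous q')
    (hψR : ∀ p ∈ triangle lam, |ψ p| ≤ R) (hqR : ∀ y ∈ Icc 0 lam, |q y| ≤ R)
    (hψ'R : ∀ p ∈ triangle lam, |ψ' p| ≤ R) (hq'R : ∀ y ∈ Icc 0 lam, |q' y| ≤ R) :
    (∀ p ∈ triangle lam, |ψ p - ψ' p| ≤
      dist (extendPair hlam ψ q hψ hq hψR hqR) (extendPair hlam ψ' q' hψ' hq' hψ'R hq'R)) ∧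
    ∀ s ∈ Icc 0 lam, |q s - q' s| ≤
      dist (extendPair hlam ψ q hψ hq hψR hqR) (extendPair hlam ψ' q' hψ' hq' hψ'R hq'R) := by
  refine ⟨fun p hp => ?_, fun s hs => ?_⟩
  · have h := abs_sub_le_dist_fst (extendPair hlam ψ q hψ hq hψR hqR)
      (extendPair hlam ψ' q' hψ' hq' hψ'R hq'R) p
    rwa [extendPair_fst_of_mem hlam _ _ _ _ hp, extendPair_fst_of_mem hlam _ _ _ _ hp] at h
  · have h := abs_sub_le_dist_snd (extendPair hlam ψ q hψ hq hψR hqR)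
      (extendPair hlam ψ' q' hψ' hq' hψ'R hq'R) s
    rwa [extendPair_snd_of_mem hlam _ _ _ _ hs, extendPair_snd_of_mem hlam _ _ _ _ hs] at h

theorem exists_fixedPoint_of_contractsOnBall (hlam : 0 ≤ lam) (hR : 0 ≤ R) (hc₀ : 0 ≤ c)
    (hc : c < 1) (hK₁ : ∀ ψ q, Continuous ψ → Continuous q → Continuous (K₁ ψ q))
    (hK₂ : ∀ ψ q, Continuous ψ → Continuous q → Continuous (K₂ ψ q))
    (hmaps : MapsBall lam R K₁ K₂) (hcontr : ContractsOnBall lam R c K₁ K₂) :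
    ∃ (ψ : ℝ × ℝ → ℝ) (q : ℝ → ℝ), Continuous ψ ∧ Continuous q ∧
      (∀ p ∈ triangle lam, |ψ p| ≤ R) ∧ (∀ y ∈ Icc (0:ℝ) lam, |q y| ≤ R) ∧
      (∀ p ∈ triangle lam, ψ p = K₁ ψ q p) ∧ (∀ y ∈ Icc (0:ℝ) lam, q y = K₂ ψ q y) := by
  let B := Metric.closedBall (0 : BoundedPair) R
  have hB (x : B) : (∀ p, |x.1.1 p| ≤ R) ∧ ∀ s, |x.1.2 s| ≤ R :=
    ⟨fun p => by simpa using (abs_sub_le_dist_fst x.1 0 p).trans x.2,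
      fun s => by simpa using (abs_sub_le_dist_snd x.1 0 s).trans x.2⟩
  have hKx (x : B) := hmaps x.1.1 x.1.2 x.1.1.continuous x.1.2.continuous
    (fun p _ => (hB x).1 p) (fun s _ => (hB x).2 s)
  have hKc (x : B) : Continuous (K₁ x.1.1 x.1.2) ∧ Continuous (K₂ x.1.1 x.1.2) :=
    ⟨hK₁ _ _ x.1.1.continuous x.1.2.continuous, hK₂ _ _ x.1.1.continuous x.1.2.continuous⟩
  let T : B → B := fun x =>
    ⟨extendPair hlam _ _ (hKc x).1 (hKc x).2 (hKx x).1 (hKx x).2,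
      extendPair_mem_closedBall hlam hR _ _ _ _⟩
  have hT : ContractingWith ⟨c, hc₀⟩ T := by
    refine ⟨hc, LipschitzWith.of_dist_le_mul fun x x' => ?_⟩
    have hK := hcontr x.1.1 x'.1.1 x.1.2 x'.1.2 (dist x x') x.1.1.continuous x'.1.1.continuous
      x.1.2.continuous x'.1.2.continuous (fun p _ => (hB x).1 p) (fun s _ => (hB x).2 s)
      (fun p _ => (hB x').1 p) (fun s _ => (hB x').2 s)
      (fun p _ => abs_sub_le_dist_fst x.1 x'.1 p) (fun s _ => abs_sub_le_dist_snd x.1 x'.1 s)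
    exact dist_extendPair_le hlam (by positivity) (hKc x).1 (hKc x).2 (hKc x').1 (hKc x').2
      (hKx x).1 (hKx x).2 (hKx x').1 (hKx x').2 hK.1 hK.2
  have : Nonempty B := ⟨⟨0, Metric.mem_closedBall_self hR⟩⟩
  have : CompleteSpace B := Metric.isClosed_closedBall.completeSpace_coe
  set x := ContractingWith.fixedPoint T hT
  have hx : T x = x := hT.fixedPoint_isFixedPt
  refine ⟨x.1.1, x.1.2, x.1.1.continuous, x.1.2.continuous, fun p _ => (hB x).1 p,
    fun s _ => (hB x).2 s, fun p hp => ?_, fun s hs => ?_⟩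
  · calc x.1.1 p = (T x).1.1 p := by rw [hx]
      _ = K₁ x.1.1 x.1.2 p :=
        extendPair_fst_of_mem hlam (hKc x).1 (hKc x).2 (hKx x).1 (hKx x).2 hp
  · calc x.1.2 s = (T x).1.2 s := by rw [hx]
      _ = K₂ x.1.1 x.1.2 s :=
        extendPair_snd_of_mem hlam (hKc x).1 (hKc x).2 (hKx x).1 (hKx x).2 hs

theorem eqOn_of_contractsOnBall (hlam : 0 ≤ lam) (hc₀ : 0 ≤ c) (hc : c < 1)
    (hcontr : ContractsOnBall lam R c K₁ K₂) :
    ∀ (ψ ψ' : ℝ × ℝ → ℝ) (q q' : ℝ → ℝ), Continuous ψ → Continuous q →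
      Continuous ψ' → Continuous q' →
      (∀ p ∈ triangle lam, |ψ p| ≤ R) → (∀ y ∈ Icc (0:ℝ) lam, |q y| ≤ R) →
      (∀ p ∈ triangle lam, |ψ' p| ≤ R) → (∀ y ∈ Icc (0:ℝ) lam, |q' y| ≤ R) →
      (∀ p ∈ triangle lam, ψ p = K₁ ψ q p) → (∀ y ∈ Icc (0:ℝ) lam, q y = K₂ ψ q y) →
      (∀ p ∈ triangle lam, ψ' p = K₁ ψ' q' p) → (∀ y ∈ Icc (0:ℝ) lam, q' y = K₂ ψ' q' y) →
      (∀ p ∈ triangle lam, ψ p = ψ' p) ∧ ∀ y ∈ Icc (0:ℝ) lam, q y = q' y := by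
  intro ψ ψ' q q' hψc hqc hψ'c hq'c hψ hq hψ' hq' hfix₁ hfix₂ hfix₁' hfix₂'
  set M := dist (extendPair hlam ψ q hψc hqc hψ hq) (extendPair hlam ψ' q' hψ'c hq'c hψ' hq')
  obtain ⟨hdψ, hdq⟩ := abs_sub_le_dist_extendPair hlam hψc hqc hψ'c hq'c hψ hq hψ' hq'
  have hK := hcontr ψ ψ' q q' M hψc hψ'c hqc hq'c hψ hq hψ' hq' hdψ hdq
  have hM : M ≤ c * M := by
    refine dist_extendPair_le hlam (mul_nonneg hc₀ dist_nonneg) hψc hqc hψ'c hq'c hψ hq hψ' hq'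
      (fun p hp => ?_) (fun s hs => ?_)
    · rw [hfix₁ p hp, hfix₁' p hp]; exact hK.1 p hp
    · rw [hfix₂ s hs, hfix₂' s hs]; exact hK.2 s hs
  have hM₀ : M = 0 := by nlinarith [show 0 ≤ M from dist_nonneg]
  exact ⟨fun p hp => sub_eq_zero.1 (abs_nonpos_iff.1 (hM₀ ▸ hdψ p hp)),
    fun s hs => sub_eq_zero.1 (abs_nonpos_iff.1 (hM₀ ▸ hdq s hs))⟩

end FixedPoint

/-- The nonlinear Volterra operator `K = (K₁, K₂)` maps the ball of radius `2A`
into itself, is a `3/8`-contraction there, and has a unique fixed point in this ball. -/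
theorem stmt0
    (A lam : ℝ) (hA : 1 ≤ A) (hlam : 0 < lam) (hlam' : lam < 1 / (16 * (1 + A) ^ 2))
    (g₁ g₂ : ℝ × ℝ → ℝ) (g₃ : ℝ → ℝ)
    (hg₁c : Continuous g₁) (hg₂c : Continuous g₂) (hg₃c : Continuous g₃)
    (hg₁ : ∀ p, |g₁ p| ≤ A) (hg₂ : ∀ p, |g₂ p| ≤ A) (hg₃ : ∀ s, |g₃ s| ≤ A)
    (Δ : Set (ℝ × ℝ)) (hΔ : Δ = {p : ℝ × ℝ | 0 ≤ p.1 ∧ p.1 ≤ p.2 ∧ p.2 ≤ 2 * lam - p.1})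
    (K₁ : (ℝ × ℝ → ℝ) → (ℝ → ℝ) → ℝ × ℝ → ℝ)
    (K₂ : (ℝ × ℝ → ℝ) → (ℝ → ℝ) → ℝ → ℝ)
    (hK₁ : ∀ ψ q p, K₁ ψ q p =
      -(∫ η in (0:ℝ)..p.1, q η * (g₁ (η, p.2 - η + p.1)
          + ∫ ζ in (0:ℝ)..η, ψ (ζ, p.2 - η + ζ))) + g₂ p)
    (hK₂ : ∀ ψ q y, K₂ ψ q y =
      -(2 * ∫ η in (0:ℝ)..y, q η * (g₁ (η, 2 * y - η)
          + ∫ ζ in (0:ℝ)..η, ψ (ζ, y - η + ζ))) + g₃ y) :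
    -- (i) self-map of the ball of radius 2A
    (∀ (ψ : ℝ × ℝ → ℝ) (q : ℝ → ℝ), Continuous ψ → Continuous q →
      (∀ p ∈ Δ, |ψ p| ≤ 2 * A) → (∀ y ∈ Icc (0:ℝ) lam, |q y| ≤ 2 * A) →
      (∀ p ∈ Δ, |K₁ ψ q p| ≤ 2 * A) ∧ (∀ y ∈ Icc (0:ℝ) lam, |K₂ ψ q y| ≤ 2 * A)) ∧
    -- (ii) contraction with constant 3/8 in the norm ‖(ψ,q)‖ = max(‖ψ‖∞, ‖q‖∞)
    (∀ (ψ ψ' : ℝ × ℝ → ℝ) (q q' : ℝ → ℝ) (M : ℝ), Continuous ψ → Continuous ψ' →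
      Continuous q → Continuous q' →
      (∀ p ∈ Δ, |ψ p| ≤ 2 * A) → (∀ y ∈ Icc (0:ℝ) lam, |q y| ≤ 2 * A) →
      (∀ p ∈ Δ, |ψ' p| ≤ 2 * A) → (∀ y ∈ Icc (0:ℝ) lam, |q' y| ≤ 2 * A) →
      (∀ p ∈ Δ, |ψ p - ψ' p| ≤ M) → (∀ y ∈ Icc (0:ℝ) lam, |q y - q' y| ≤ M) →
      (∀ p ∈ Δ, |K₁ ψ q p - K₁ ψ' q' p| ≤ 3 / 8 * M) ∧
      (∀ y ∈ Icc (0:ℝ) lam, |K₂ ψ q y - K₂ ψ' q' y| ≤ 3 / 8 * M)) ∧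
    -- (iii) existence of a fixed point in the ball, unique on the domain
    ((∃ (ψ : ℝ × ℝ → ℝ) (q : ℝ → ℝ), Continuous ψ ∧ Continuous q ∧
        (∀ p ∈ Δ, |ψ p| ≤ 2 * A) ∧ (∀ y ∈ Icc (0:ℝ) lam, |q y| ≤ 2 * A) ∧
        (∀ p ∈ Δ, ψ p = K₁ ψ q p) ∧ (∀ y ∈ Icc (0:ℝ) lam, q y = K₂ ψ q y)) ∧
      (∀ (ψ ψ' : ℝ × ℝ → ℝ) (q q' : ℝ → ℝ), Continuous ψ → Continuous q →
        Continuous ψ' → Continuous q' →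
        (∀ p ∈ Δ, |ψ p| ≤ 2 * A) → (∀ y ∈ Icc (0:ℝ) lam, |q y| ≤ 2 * A) →
        (∀ p ∈ Δ, |ψ' p| ≤ 2 * A) → (∀ y ∈ Icc (0:ℝ) lam, |q' y| ≤ 2 * A) →
        (∀ p ∈ Δ, ψ p = K₁ ψ q p) → (∀ y ∈ Icc (0:ℝ) lam, q y = K₂ ψ q y) →
        (∀ p ∈ Δ, ψ' p = K₁ ψ' q' p) → (∀ y ∈ Icc (0:ℝ) lam, q' y = K₂ ψ' q' y) →
        (∀ p ∈ Δ, ψ p = ψ' p) ∧ ∀ y ∈ Icc (0:ℝ) lam, q y = q' y)) := by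
  subst hΔ
  have hsmall : (1 + A) * lam ≤ 1 / 16 := one_add_mul_le_of_lt (by linarith) hlam'
  obtain rfl : K₁ = operatorK₁ g₁ g₂ := funext fun ψ => funext fun q => funext (hK₁ ψ q)
  obtain rfl : K₂ = operatorK₂ g₁ g₃ := funext fun ψ => funext fun q => funext fun y => by
    rw [hK₂, operatorK₂, volterra_diag]
  have hmaps := mapsBall_operatorK hsmall hg₁ hg₂ hg₃
  have hcontr := contractsOnBall_operatorK (g₂ := g₂) (g₃ := g₃) hg₁c hsmall hg₁
  refine ⟨hmaps, hcontr, exists_fixedPoint_of_contractsOnBall hlam.le (by linarith)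
    (by norm_num) (by norm_num) (fun _ _ => continuous_operatorK₁ hg₁c hg₂c)
    (fun _ _ => continuous_operatorK₂ hg₁c hg₃c) hmaps hcontr,
    eqOn_of_contractsOnBall hlam.le (by norm_num) (by norm_num) hcontr⟩
end

section
/- Let w₁, w₂ be a fundamental system of solutions of the linear ODE w'' + q(y)w = 0 with constant Wronskian W = w₁w₂' - w₁'w₂ ≠ 0, and let A = (A_{ij}) be a real symmetric 2×2 matrix with det(A)·W² = -k² for a constant k > 0. If the quadratic form Σ_{i,j} A_{ij} w_i(y) w_j(y) is positive on an interval, then w(y) = √(Σ_{i,j} A_{ij} w_i(y) w_j(y)) solves the nonlinear equation w'' + q(y) w = -k²·w^{-3} on that interval. -/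
/-!
Write `w = (w₁, w₂)` and `F = w ⬝ᵥ A *ᵥ w`. Since `w'' = -q w`, one has
`F' = 2 w ⬝ᵥ A *ᵥ w'` and `F'' = -2 q F + 2 w' ⬝ᵥ A *ᵥ w'`, so for `S = √F`
`S'' + q S = (2 F F'' - F'² + 4 q F²) / (4 S³) = (F · w'Aw' - (wAw')²) / S³`.
For a symmetric `2 × 2` matrix the numerator is `det A` times the squared Wronskian
`w₁ w₂' - w₁' w₂`, which is `-k²` by hypothesis.
-/

open Filter Topology Matrix

theorem Matrix.IsSymm.dotProduct_mulVec_comm {n R : Type*} [Fintype n] [CommSemiring R]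
    {A : Matrix n n R} (hA : A.IsSymm) (u v : n → R) :
    u ⬝ᵥ A *ᵥ v = v ⬝ᵥ A *ᵥ u := by
  rw [dotProduct_mulVec, dotProduct_comm, ← mulVec_transpose, hA.eq]

theorem Matrix.IsSymm.dotProduct_mulVec_mul_sub_sq {R : Type*} [CommRing R]
    {A : Matrix (Fin 2) (Fin 2) R} (hA : A.IsSymm) (u v : Fin 2 → R) :
    (u ⬝ᵥ A *ᵥ u) * (v ⬝ᵥ A *ᵥ v) - (u ⬝ᵥ A *ᵥ v) ^ 2 = A.det * (u 0 * v 1 - v 0 * u 1) ^ 2 := by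
  have h10 : A 1 0 = A 0 1 := hA.apply 0 1
  simp only [dotProduct, mulVec, Fin.sum_univ_two, det_fin_two, h10]
  ring

theorem hasDerivAt_dotProduct_mulVec {n : Type*} [Fintype n] (A : Matrix n n ℝ)
    {u v : ℝ → n → ℝ} {u' v' : n → ℝ} {x : ℝ}
    (hu : HasDerivAt u u' x) (hv : HasDerivAt v v' x) :
    HasDerivAt (fun s => u s ⬝ᵥ A *ᵥ v s) (u' ⬝ᵥ A *ᵥ v x + u x ⬝ᵥ A *ᵥ v') x := by
  classical
  let B : (n → ℝ) →L[ℝ] (n → ℝ) →L[ℝ] ℝ :=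
    LinearMap.toContinuousLinearMap
      (LinearMap.toContinuousLinearMap.toLinearMap ∘ₗ Matrix.toLinearMap₂' ℝ A)
  have hB : ∀ a b, B a b = a ⬝ᵥ A *ᵥ b := fun a b => Matrix.toLinearMap₂'_apply' A a b
  simpa only [hB, add_comm] using B.hasDerivAt_of_bilinear (fun _ => hu) (fun _ => hv)

theorem deriv_deriv_sqrt {F F' : ℝ → ℝ} {F'' y : ℝ}
    (hF : ∀ᶠ s in 𝓝 y, HasDerivAt F (F' s) s ∧ 0 < F s) (hF' : HasDerivAt F' F'' y) :
    deriv (deriv fun s => √(F s)) y = (2 * F y * F'' - F' y ^ 2) / (4 * √(F y) ^ 3) := by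
  obtain ⟨hFy, hpos⟩ := hF.self_of_nhds
  have hsqrt_pos : 0 < √(F y) := Real.sqrt_pos.2 hpos
  have hderiv : deriv (fun s => √(F s)) =ᶠ[𝓝 y] fun s => F' s / (2 * √(F s)) :=
    hF.mono fun s hs => (hs.1.sqrt hs.2.ne').deriv
  rw [hderiv.deriv_eq, (hF'.fun_div ((hFy.sqrt hpos.ne').const_mul 2) (by positivity)).deriv]
  field_simp
  rw [Real.sq_sqrt hpos.le]
  ring

theorem Matrix.IsSymm.deriv_deriv_sqrt_dotProduct_mulVec_add_mul
    {A : Matrix (Fin 2) (Fin 2) ℝ} (hA : A.IsSymm) {w w' : ℝ → Fin 2 → ℝ} {q y : ℝ}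
    (hw : ∀ᶠ s in 𝓝 y, HasDerivAt w (w' s) s ∧ 0 < w s ⬝ᵥ A *ᵥ w s)
    (hw' : HasDerivAt w' (-q • w y) y) :
    deriv (deriv fun s => √(w s ⬝ᵥ A *ᵥ w s)) y + q * √(w y ⬝ᵥ A *ᵥ w y)
      = A.det * (w y 0 * w' y 1 - w' y 0 * w y 1) ^ 2 / √(w y ⬝ᵥ A *ᵥ w y) ^ 3 := by
  obtain ⟨hwy, hpos⟩ := hw.self_of_nhds
  rw [deriv_deriv_sqrt (hw.mono fun s hs => ⟨hasDerivAt_dotProduct_mulVec A hs.1 hs.1, hs.2⟩)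
    ((hasDerivAt_dotProduct_mulVec A hw' hwy).add (hasDerivAt_dotProduct_mulVec A hwy hw')),
    ← hA.dotProduct_mulVec_mul_sub_sq]
  simp only [smul_dotProduct, mulVec_smul, dotProduct_smul, smul_eq_mul,
    hA.dotProduct_mulVec_comm (w' y) (w y)]
  have hsq := Real.sq_sqrt hpos.le
  field_simp
  linear_combination 4 * q * (√(w y ⬝ᵥ A *ᵥ w y) ^ 2 + w y ⬝ᵥ A *ᵥ w y) * hsq

theorem ContDiffOn.hasDerivAt_deriv_deriv {f : ℝ → ℝ} {I : Set ℝ} (hf : ContDiffOn ℝ 2 f I)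
    (hI : IsOpen I) {s : ℝ} (hs : s ∈ I) :
    HasDerivAt f (deriv f s) s ∧ HasDerivAt (deriv f) (deriv (deriv f) s) s :=
  ⟨((hf.differentiableOn two_ne_zero).differentiableAt (hI.mem_nhds hs)).hasDerivAt,
    (((hf.deriv_of_isOpen hI (by norm_num : (1 : WithTop ℕ∞) + 1 ≤ 2)).differentiableOn
      one_ne_zero).differentiableAt (hI.mem_nhds hs)).hasDerivAt⟩

theorem stmt9_general
    (I : Set ℝ) (hI : IsOpen I) (q : ℝ → ℝ)
    (w₁ w₂ : ℝ → ℝ)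
    (hw₁ : ContDiffOn ℝ 2 w₁ I) (hw₂ : ContDiffOn ℝ 2 w₂ I)
    (hode₁ : ∀ y ∈ I, deriv (deriv w₁) y + q y * w₁ y = 0)
    (hode₂ : ∀ y ∈ I, deriv (deriv w₂) y + q y * w₂ y = 0)
    (W : ℝ)
    (hWr : ∀ y ∈ I, w₁ y * deriv w₂ y - deriv w₁ y * w₂ y = W)
    (A : Matrix (Fin 2) (Fin 2) ℝ) (hAsym : A.IsSymm)
    (k : ℝ) (hdet : A.det * W ^ 2 = -k ^ 2)
    (F : ℝ → ℝ)
    (hF : ∀ y, F y = A 0 0 * w₁ y * w₁ y + A 0 1 * w₁ y * w₂ y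
        + A 1 0 * w₂ y * w₁ y + A 1 1 * w₂ y * w₂ y)
    (hFpos : ∀ y ∈ I, 0 < F y) :
    ∀ y ∈ I,
      deriv (deriv fun s => Real.sqrt (F s)) y + q y * Real.sqrt (F y)
        = -k ^ 2 / Real.sqrt (F y) ^ 3 := by
  intro y hy
  let w : ℝ → Fin 2 → ℝ := fun s => ![w₁ s, w₂ s]
  let w' : ℝ → Fin 2 → ℝ := fun s => ![deriv w₁ s, deriv w₂ s]
  have hFw : F = fun s => w s ⬝ᵥ A *ᵥ w s := by
    funext s
    simp only [hF, w, dotProduct, mulVec, Fin.sum_univ_two, cons_val_zero, cons_val_one]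
    ring
  have hw : ∀ s ∈ I, HasDerivAt w (w' s) s := fun s hs =>
    hasDerivAt_pi.2 (Fin.forall_fin_two.2
      ⟨(hw₁.hasDerivAt_deriv_deriv hI hs).1, (hw₂.hasDerivAt_deriv_deriv hI hs).1⟩)
  have hw' : HasDerivAt w' (-q y • w y) y :=
    hasDerivAt_pi.2 (Fin.forall_fin_two.2
      ⟨(hw₁.hasDerivAt_deriv_deriv hI hy).2.congr_deriv (by
        simp only [w, Pi.smul_apply, cons_val_zero, smul_eq_mul]; linear_combination hode₁ y hy),
        (hw₂.hasDerivAt_deriv_deriv hI hy).2.congr_deriv (by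
        simp only [w, Pi.smul_apply, cons_val_one, cons_val_fin_one, smul_eq_mul]; linear_combination hode₂ y hy)⟩)
  have hwpos : ∀ᶠ s in 𝓝 y, HasDerivAt w (w' s) s ∧ 0 < w s ⬝ᵥ A *ᵥ w s :=
    eventually_of_mem (hI.mem_nhds hy) fun s hs => ⟨hw s hs, congrFun hFw s ▸ hFpos s hs⟩
  have hWy : w y 0 * w' y 1 - w' y 0 * w y 1 = W := hWr y hy
  rw [hFw, hAsym.deriv_deriv_sqrt_dotProduct_mulVec_add_mul hwpos hw', hWy, hdet]

/-- Ermakov–Pinney: `w = √(Σ A_{ij} wᵢ wⱼ)` solves `w'' + q w = -k² w⁻³`. -/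
theorem stmt9
    (I : Set ℝ) (hI : IsOpen I) (q : ℝ → ℝ) (hq : ContinuousOn q I)
    (w₁ w₂ : ℝ → ℝ)
    (hw₁ : ContDiffOn ℝ 2 w₁ I) (hw₂ : ContDiffOn ℝ 2 w₂ I)
    (hode₁ : ∀ y ∈ I, deriv (deriv w₁) y + q y * w₁ y = 0)
    (hode₂ : ∀ y ∈ I, deriv (deriv w₂) y + q y * w₂ y = 0)
    (W : ℝ) (hW : W ≠ 0)
    (hWr : ∀ y ∈ I, w₁ y * deriv w₂ y - deriv w₁ y * w₂ y = W)
    (A : Matrix (Fin 2) (Fin 2) ℝ) (hAsym : A.IsSymm)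
    (k : ℝ) (hk : 0 < k) (hdet : A.det * W ^ 2 = -k ^ 2)
    (F : ℝ → ℝ)
    (hF : ∀ y, F y = A 0 0 * w₁ y * w₁ y + A 0 1 * w₁ y * w₂ y
        + A 1 0 * w₂ y * w₁ y + A 1 1 * w₂ y * w₂ y)
    (hFpos : ∀ y ∈ I, 0 < F y) :
    ∀ y ∈ I,
      deriv (deriv fun s => Real.sqrt (F s)) y + q y * Real.sqrt (F y)
        = -k ^ 2 / Real.sqrt (F y) ^ 3 :=
  stmt9_general I hI q w₁ w₂ hw₁ hw₂ hode₁ hode₂ W hWr A hAsym k hdet F hF hFpos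
end
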